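/- Let A be an Ext-finite abelian k-linear category and let E be an object of D^b(A) satisfying conditions (S1), (S2) and (S3), so that E ≅ ⊕_{i=1}^r E_i with End(E) ≅ k^r. Then condition (S4) holds if and only if (S4') there is a permutation σ of {1,…,r} such that Hom(E_i, F) ≅ Hom(F, E_{σ(i)}[n])*, naturally in F ∈ D^b(A), for every i. -/

import Mathlib

/-!
Common framework for formalizing "Abelian hereditary fractionally Calabi-Yau categories"
(van Roosmalen).

We work with a `k`-linear Hom-finite triangulated category `D`, thought of as the bounded
derived category `D^b(A)` of an abelian category `A`.  The abelian category `A` itself is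
represented by the set of objects of a heart of a bounded t-structure on `D`.  For
*hereditary* abelian categories this is encoded by the predicate `IsHereditaryHeart`:
a class of objects, closed under isomorphisms, finite direct sums, direct summands and
extensions, such that morphisms between its objects are concentrated in (shift) degrees
`0` and `1`, and such that every object of `D` decomposes as a finite direct sum of shifts
of objects of the heart.  (For a hereditary abelian category `A`, the image of `A` in
`D^b(A)` has exactly these properties, and conversely such a subcategory is the heart of a
bounded t-structure with hereditary heart whose realization functor `D^b(heart) → D` is an
equivalence; morphisms of `A` are morphisms of `D` between objects of the heart,
`Ext^1`'s are morphisms into the shift, short exact sequences correspond to distinguished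
triangles with all three vertices in the heart, etc.)

All abelian-categorical notions (monomorphisms, simple objects, noetherian objects,
connectedness = indecomposability of the abelian category, torsion theories, ...) are
expressed inside `D` relative to such a heart.
-/

open CategoryTheory Limits Pretriangulated Opposite

universe w v u u' v'

namespace FCY

section Pow

variable {D : Type u} [Category.{v} D]

/-- The `n`-fold composition of an endofunctor. -/
def functorPow (F : D ⥤ D) : ℕ → D ⥤ D
  | 0 => 𝟭 D
  | n + 1 => functorPow F n ⋙ F

end Pow

section Serre

variable (k : Type v) [Field k]
variable (D : Type u) [Category.{v} D] [Preadditive D] [Linear k D]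

/-- A Serre functor on a Hom-finite `k`-linear category: an autoequivalence `S` together
with a pairing realizing natural isomorphisms `Hom(X,Y) ≅ Hom(Y, S X)*`. -/
structure SerreFunctor where
  /-- the underlying autoequivalence -/
  S : D ≌ D
  /-- the isomorphism `Hom(X,Y) ≅ Hom(Y, S X)*` -/
  pairing : ∀ X Y : D, (X ⟶ Y) →ₗ[k] Module.Dual k (Y ⟶ S.functor.obj X)
  pairing_bijective : ∀ X Y : D, Function.Bijective (pairing X Y)
  pairing_natural_left : ∀ {X X' Y : D} (f : X' ⟶ X) (g : X ⟶ Y) (h : Y ⟶ S.functor.obj X'),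
    pairing X' Y (f ≫ g) h = pairing X Y g (h ≫ S.functor.map f)
  pairing_natural_right : ∀ {X Y Y' : D} (g : X ⟶ Y) (u : Y ⟶ Y') (h : Y' ⟶ S.functor.obj X),
    pairing X Y' (g ≫ u) h = pairing X Y g (u ≫ h)

variable {k D}

/-- The Auslander-Reiten translate `τ = S ∘ [-1]`. -/
def SerreFunctor.tau [HasShift D ℤ] (SF : SerreFunctor k D) : D ⥤ D :=
  SF.S.functor ⋙ shiftFunctor D (-1 : ℤ)

/-- The inverse Auslander-Reiten translate `τ⁻¹ = S⁻¹ ∘ [1]`. -/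
def SerreFunctor.tauInv [HasShift D ℤ] (SF : SerreFunctor k D) : D ⥤ D :=
  shiftFunctor D (1 : ℤ) ⋙ SF.S.inverse

end Serre

section Basic

variable {D : Type u} [Category.{v} D] [Preadditive D] [HasZeroObject D] [HasShift D ℤ]
  [∀ n : ℤ, (shiftFunctor D n).Additive] [Pretriangulated D]

/-- `f` is an irreducible morphism: it is neither a split monomorphism nor a split
epimorphism, and in any factorization `f = g ≫ h` either `g` is a split mono or `h` is a
split epi. -/
def IsIrreducibleHom {X Y : D} (f : X ⟶ Y) : Prop :=
  ¬ IsSplitMono f ∧ ¬ IsSplitEpi f ∧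
    ∀ (Z : D) (g : X ⟶ Z) (h : Z ⟶ Y), g ≫ h = f → IsSplitMono g ∨ IsSplitEpi h

/-- Two indecomposable objects are neighbours in the Auslander-Reiten quiver:
they are isomorphic, or there is an irreducible map between them (in one direction or
the other). -/
def ARStep (X Y : D) : Prop :=
  Indecomposable X ∧ Indecomposable Y ∧
    (Nonempty (X ≅ Y) ∨ (∃ f : X ⟶ Y, IsIrreducibleHom f) ∨ ∃ f : Y ⟶ X, IsIrreducibleHom f)

/-- `K` is a component of the Auslander-Reiten quiver: a nonempty class of indecomposable
objects, closed under `ARStep`, any two of whose members are connected by a finite chain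
of `ARStep`s. -/
def IsARComponent (K : Set D) : Prop :=
  K.Nonempty ∧ (∀ X ∈ K, Indecomposable X) ∧
    (∀ X ∈ K, ∀ Y : D, ARStep X Y → Y ∈ K) ∧
    ∀ X ∈ K, ∀ Y ∈ K, Relation.ReflTransGen (fun A B : D => ARStep A B) X Y

/-- `τX ⟶ M ⟶ X ⟶ (τX)[1]` is an Auslander-Reiten triangle ending in `X`. -/
structure IsARTriangle (A M X : D) (f : A ⟶ M) (g : M ⟶ X) (h : X ⟶ A⟦(1 : ℤ)⟧) : Prop where
  dist : Triangle.mk f g h ∈ (distTriang D)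
  ind₁ : Indecomposable A
  ind₃ : Indecomposable X
  not_split : ¬ IsSplitEpi g
  right_almost_split : ∀ (Z : D) (u : Z ⟶ X), ¬ IsSplitEpi u → ∃ v : Z ⟶ M, v ≫ g = u

/-- `X` is a peripheral object: an indecomposable object such that the middle term of the
Auslander-Reiten triangle ending in `X` is indecomposable. -/
def IsPeripheral (X : D) : Prop :=
  ∃ (A M : D) (f : A ⟶ M) (g : M ⟶ X) (h : X ⟶ A⟦(1 : ℤ)⟧),
    IsARTriangle A M X f g h ∧ Indecomposable M

/-- A parameterization of a tube of rank `r` : the objects are indexed by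
`ZMod r × ℕ` (the second coordinate is the distance to the mouth of the tube, so the
objects `(a, 0)` are the peripheral ones), `τ` acts by `(a, n) ↦ (a + 1, n)`, and the
arrows of `ℤA∞/⟨τ^r⟩` are realized by irreducible maps `(a, n) → (a, n + 1)` and
`(a, n + 1) → (a - 1, n)`. -/
structure TubeParam (τ : D ⥤ D) (K : Set D) (r : ℕ) where
  /-- the object at a vertex of `ℤA∞/⟨τ^r⟩` -/
  obj : ZMod r × ℕ → D
  mem : ∀ p, obj p ∈ K
  surj : ∀ X ∈ K, ∃ p, Nonempty (X ≅ obj p)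
  inj : ∀ p q, Nonempty (obj p ≅ obj q) → p = q
  tau_obj : ∀ (a : ZMod r) (n : ℕ), Nonempty (τ.obj (obj (a, n)) ≅ obj (a + 1, n))
  up : ∀ (a : ZMod r) (n : ℕ), ∃ f : obj (a, n) ⟶ obj (a, n + 1), IsIrreducibleHom f
  down : ∀ (a : ZMod r) (n : ℕ), ∃ f : obj (a, n + 1) ⟶ obj (a - 1, n), IsIrreducibleHom f

/-- `K` is a tube of rank `r`, i.e. an Auslander-Reiten component of the form
`ℤA∞/⟨τ^r⟩`. -/
structure IsTube (τ : D ⥤ D) (K : Set D) (r : ℕ) : Prop where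
  pos : 0 < r
  component : IsARComponent K
  param : Nonempty (TubeParam τ K r)

/-- `f` belongs to the radical of the category. -/
def IsRadical {X Y : D} (f : X ⟶ Y) : Prop :=
  ∀ g : Y ⟶ X, IsIso (𝟙 X - f ≫ g)

/-- `f` is a composite of `n` radical morphisms. -/
inductive IsRadComposite : ℕ → ∀ {X Y : D}, (X ⟶ Y) → Prop
  | single {X Y : D} (f : X ⟶ Y) (hf : IsRadical f) : IsRadComposite 1 f
  | comp {X Y Z : D} {n : ℕ} (f : X ⟶ Y) (g : Y ⟶ Z) (hf : IsRadical f)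
      (hg : IsRadComposite n g) : IsRadComposite (n + 1) (f ≫ g)

/-- `f` lies in the infinite radical `rad^∞(X,Y)`, i.e. in `rad^n(X,Y)` (the additive
closure of composites of `n` radical maps) for every `n`. -/
def InInfiniteRadical {X Y : D} (f : X ⟶ Y) : Prop :=
  ∀ n : ℕ, f ∈ AddSubgroup.closure {g : X ⟶ Y | IsRadComposite n g}

/-- An Auslander-Reiten component is generalized standard if `rad^∞(X,Y) = 0` for all its
objects. -/
def IsGenStandard (K : Set D) : Prop :=
  ∀ X ∈ K, ∀ Y ∈ K, ∀ f : X ⟶ Y, InInfiniteRadical f → f = 0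

/-- The right perpendicular class of `U`. -/
def RightPerp (U : Set D) : Set D :=
  {V : D | ∀ W ∈ U, ∀ f : W ⟶ V, f = 0}

/-- `U` is an aisle (equivalently, `U = D^{≤0}` for a t-structure): it is closed under
isomorphisms, positive shifts and extensions, and every object fits in a (truncation)
triangle with first vertex in `U` and third vertex in `U^⊥`. -/
structure IsAisle (U : Set D) : Prop where
  iso_closed : ∀ X Y : D, X ∈ U → Nonempty (X ≅ Y) → Y ∈ U
  shift_mem : ∀ X ∈ U, X⟦(1 : ℤ)⟧ ∈ U
  ext_closed : ∀ T : Triangle D, T ∈ (distTriang D) → T.obj₁ ∈ U → T.obj₃ ∈ U → T.obj₂ ∈ U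
  truncation : ∀ X : D, ∃ T : Triangle D, T ∈ (distTriang D) ∧ T.obj₂ = X ∧
    T.obj₁ ∈ U ∧ T.obj₃ ∈ RightPerp U

/-- The heart of the t-structure with aisle `U` (`D^{≤0} = U`): the objects of `U` which
receive no nonzero morphism from `U⟦1⟧`. -/
def HeartOfAisle (U : Set D) : Set D :=
  {X : D | X ∈ U ∧ ∀ W ∈ U, ∀ f : W⟦(1 : ℤ)⟧ ⟶ X, f = 0}

/-- A class of objects is invariant under an endofunctor (e.g. `τ`-invariant aisles). -/
def InvariantUnder (τ : D ⥤ D) (U : Set D) : Prop :=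
  ∀ X : D, X ∈ U ↔ τ.obj X ∈ U

/-- A thick subcategory of `D`, given by its class of objects: closed under isomorphisms,
shifts, cones and direct summands. -/
structure IsThickSet [HasFiniteBiproducts D] (P : Set D) : Prop where
  zero_mem : ∀ X : D, IsZero X → X ∈ P
  iso_closed : ∀ X Y : D, X ∈ P → Nonempty (X ≅ Y) → Y ∈ P
  shift_mem : ∀ X ∈ P, ∀ n : ℤ, X⟦n⟧ ∈ P
  cone_closed : ∀ T : Triangle D, T ∈ (distTriang D) → T.obj₁ ∈ P → T.obj₂ ∈ P → T.obj₃ ∈ P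
  summand_mem : ∀ X Y : D, (X ⊞ Y) ∈ P → X ∈ P

/-- A tilting object of the triangulated category `D`: it has no self-extensions in nonzero
degrees, and the smallest thick subcategory containing it is all of `D`. -/
def IsTiltingObject [HasFiniteBiproducts D] (T : D) : Prop :=
  (∀ n : ℤ, n ≠ 0 → ∀ f : T ⟶ T⟦n⟧, f = 0) ∧
    ∀ P : Set D, IsThickSet P → T ∈ P → ∀ X : D, X ∈ P

/-- A t-structure is bounded if every object is bounded on both sides. -/
def TBounded (t : Triangulated.TStructure D) : Prop :=
  ∀ X : D, ∃ a b : ℤ, t.le a X ∧ t.ge b X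

/-- The set of objects of the heart of a t-structure. -/
def THeart (t : Triangulated.TStructure D) : Set D :=
  {X : D | t.le 0 X ∧ t.ge 0 X}

end Basic

section Heart

variable {D : Type u} [Category.{v} D] [Preadditive D] [HasZeroObject D] [HasShift D ℤ]
  [∀ n : ℤ, (shiftFunctor D n).Additive] [Pretriangulated D] [HasFiniteBiproducts D]

/-- The objects of `S` form the heart of a bounded t-structure on `D` whose heart is a
*hereditary* abelian category with `D` as its bounded derived category: `S` is additively
closed, morphisms between objects of `S` are concentrated in degrees `0` and `1`, `S` is
closed under extensions, and every object of `D` is a finite direct sum of shifts of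
objects of `S`.  In particular the abelian category `S` is derived equivalent to the heart
of any other class of objects satisfying `IsHereditaryHeart` in the same category `D`. -/
structure IsHereditaryHeart (S : Set D) : Prop where
  zero_mem : ∀ X : D, IsZero X → X ∈ S
  iso_closed : ∀ X Y : D, X ∈ S → Nonempty (X ≅ Y) → Y ∈ S
  sum_mem : ∀ X Y : D, X ∈ S → Y ∈ S → (X ⊞ Y) ∈ S
  summand_mem : ∀ X Y : D, (X ⊞ Y) ∈ S → X ∈ S
  hom_vanish : ∀ X Y : D, X ∈ S → Y ∈ S → ∀ n : ℤ, n ≠ 0 → n ≠ 1 → ∀ f : X ⟶ Y⟦n⟧, f = 0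
  ext_closed : ∀ T : Triangle D, T ∈ (distTriang D) → T.obj₁ ∈ S → T.obj₃ ∈ S → T.obj₂ ∈ S
  generates : ∀ Z : D, ∃ (m : ℕ) (X : Fin m → D) (d : Fin m → ℤ),
    (∀ i, X i ∈ S) ∧ Nonempty (Z ≅ ⨁ fun i => (X i)⟦d i⟧)

/-- `f : X ⟶ Y` is a monomorphism of the abelian category with class of objects `S`:
both objects lie in `S` and the cone of `f` again lies in `S`. -/
def HeartMono (S : Set D) {X Y : D} (f : X ⟶ Y) : Prop :=
  X ∈ S ∧ Y ∈ S ∧ ∃ (Z : D) (g : Y ⟶ Z) (h : Z ⟶ X⟦(1 : ℤ)⟧),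
    Z ∈ S ∧ Triangle.mk f g h ∈ (distTriang D)

/-- `f : X ⟶ Y` is an epimorphism of the abelian category with class of objects `S`. -/
def HeartEpi (S : Set D) {X Y : D} (f : X ⟶ Y) : Prop :=
  X ∈ S ∧ Y ∈ S ∧ ∃ (Z : D) (g : Z ⟶ X) (h : Y ⟶ Z⟦(1 : ℤ)⟧),
    Z ∈ S ∧ Triangle.mk g f h ∈ (distTriang D)

/-- `X` is a simple object of the abelian category with class of objects `S`. -/
def HeartSimple (S : Set D) (X : D) : Prop :=
  X ∈ S ∧ ¬ IsZero X ∧ ∀ (Y : D) (f : Y ⟶ X), HeartMono S f → f = 0 ∨ IsIso f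

/-- `X` is a noetherian object of the abelian category with class of objects `S`:
every ascending chain of subobjects of `X` stabilizes. -/
def HeartNoetherianObj (S : Set D) (X : D) : Prop :=
  ∀ (c : ℕ → D) (g : ∀ n : ℕ, c n ⟶ c (n + 1)) (u : ∀ n : ℕ, c n ⟶ X),
    (∀ n, HeartMono S (g n)) → (∀ n, HeartMono S (u n)) → (∀ n, g n ≫ u (n + 1) = u n) →
      ∃ N : ℕ, ∀ n : ℕ, N ≤ n → IsIso (g n)

/-- The abelian category with class of objects `S` is indecomposable (connected): it is
nonzero, and it does not split as a coproduct of two nonzero subcategories. -/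
def HeartConnected (S : Set D) : Prop :=
  (∃ X ∈ S, ¬ IsZero X) ∧
    ¬ ∃ S₁ S₂ : Set D, S₁ ⊆ S ∧ S₂ ⊆ S ∧
      (∃ X ∈ S₁, ¬ IsZero X) ∧ (∃ X ∈ S₂, ¬ IsZero X) ∧
      (∀ X ∈ S, Indecomposable X → X ∈ S₁ ∨ X ∈ S₂) ∧
      (∀ X ∈ S₁, ∀ Y ∈ S₂, ∀ n : ℤ, ∀ f : X ⟶ Y⟦n⟧, f = 0) ∧
      (∀ X ∈ S₂, ∀ Y ∈ S₁, ∀ n : ℤ, ∀ f : X ⟶ Y⟦n⟧, f = 0)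

/-- The closure of a class of objects under direct sums, direct summands and extensions
(inside the abelian category with class of objects containing `K`). -/
inductive AddExtClosure (K : Set D) : D → Prop
  | of (X : D) : X ∈ K → AddExtClosure K X
  | zero (X : D) : IsZero X → AddExtClosure K X
  | iso (X Y : D) : AddExtClosure K X → Nonempty (X ≅ Y) → AddExtClosure K Y
  | sum (X Y : D) : AddExtClosure K X → AddExtClosure K Y → AddExtClosure K (X ⊞ Y)
  | summand (X Y Z : D) : AddExtClosure K X → Nonempty ((Y ⊞ Z) ≅ X) → AddExtClosure K Y
  | ext (T : Triangle D) : T ∈ (distTriang D) → AddExtClosure K T.obj₁ →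
      AddExtClosure K T.obj₃ → AddExtClosure K T.obj₂

end Heart

section Spherical

variable {k : Type v} [Field k]
variable {D : Type u} [Category.{v} D] [Preadditive D] [Linear k D] [HasZeroObject D]
  [HasShift D ℤ] [∀ n : ℤ, (shiftFunctor D n).Additive] [Pretriangulated D]

/-- Composition `Hom(X, Y⟦a⟧) × Hom(Y, Z⟦b⟧) → Hom(X, Z⟦c⟧)` (`a + b = c`). -/
noncomputable def compTo {X Y Z : D} (a b c : ℤ) (h : a + b = c) (g : X ⟶ Y⟦a⟧)
    (f : Y ⟶ Z⟦b⟧) : X ⟶ Z⟦c⟧ :=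
  g ≫ (shiftFunctor D a).map f ≫ (shiftFunctorAdd' D b a c (by omega)).inv.app Z

variable (k)

/-- Condition (S2) for a generalized spherical object `E = ⊕ E i`: the morphisms from and
to `E` are concentrated in finitely many degrees (together with the ambient Hom-finiteness
this says that `⊕ᵢ Hom^i(E,F)` and `⊕ᵢ Hom^i(F,E)` are finite dimensional). -/
def SphericalS2 {r : ℕ} (E : Fin r → D) : Prop :=
  ∀ F : D, ∃ s : Finset ℤ, ∀ m : ℤ, m ∉ s → ∀ i : Fin r,
    (∀ f : E i ⟶ F⟦m⟧, f = 0) ∧ (∀ f : F ⟶ (E i)⟦m⟧, f = 0)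

/-- Condition (S3) for a generalized `n`-spherical object `E = ⊕ E i`:
`End(E) ≅ k^r` as a `k`-algebra, `Hom^n(E,E) ≅ End(E)` as a left and right module
(equivalently, the dimension matrix of `Hom^n(E i, E j)` is a permutation matrix), and
`Hom^m(E,E) = 0` for `m ≠ 0, n`. -/
def SphericalS3 (n : ℤ) {r : ℕ} (E : Fin r → D) : Prop :=
  (∀ i, Module.finrank k (E i ⟶ E i) = 1) ∧
  (∀ i j : Fin r, i ≠ j → ∀ f : E i ⟶ E j, f = 0) ∧
  (∃ σ : Equiv.Perm (Fin r),
    (∀ i, Module.finrank k (E i ⟶ (E (σ i))⟦n⟧) = 1) ∧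
    (∀ i j : Fin r, j ≠ σ i → ∀ f : E i ⟶ (E j)⟦n⟧, f = 0)) ∧
  (∀ (i j : Fin r) (m : ℤ), m ≠ 0 → m ≠ n → ∀ f : E i ⟶ (E j)⟦m⟧, f = 0)

/-- Condition (S4) for a generalized `n`-spherical object `E = ⊕ E i`: for every `j` and
`F`, the composition pairing `Hom^j(F,E) × Hom^{n-j}(E,F) → Hom^n(E,E)` is
non-degenerate. -/
def SphericalS4 (n : ℤ) {r : ℕ} (E : Fin r → D) : Prop :=
  (∀ (j : ℤ) (F : D) (i' : Fin r) (f : F ⟶ (E i')⟦j⟧),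
    (∀ (i : Fin r) (g : E i ⟶ F⟦n - j⟧), compTo (n - j) j n (by omega) g f = 0) → f = 0) ∧
  (∀ (j : ℤ) (F : D) (i : Fin r) (g : E i ⟶ F⟦n - j⟧),
    (∀ (i' : Fin r) (f : F ⟶ (E i')⟦j⟧), compTo (n - j) j n (by omega) g f = 0) → g = 0)

/-- The (contravariant) `k`-linear duality functor on `ModuleCat k`. -/
noncomputable def modDual : (ModuleCat.{v} k)ᵒᵖ ⥤ ModuleCat.{v} k where
  obj M := ModuleCat.of k (Module.Dual k M.unop)
  map f := ModuleCat.ofHom (LinearMap.dualMap f.unop.hom)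

/-- Condition (S4') for a generalized `n`-spherical object `E = ⊕ E i`: there is a
permutation `σ` such that `Hom(E i, -) ≅ Hom(-, E (σ i) ⟦n⟧)*` naturally. -/
def SphericalS4' (n : ℤ) {r : ℕ} (E : Fin r → D) : Prop :=
  ∃ σ : Equiv.Perm (Fin r), ∀ i : Fin r,
    Nonempty ((linearCoyoneda k D).obj (op (E i)) ≅
      ((linearYoneda k D).obj ((E (σ i))⟦n⟧)).rightOp ⋙ modDual k)

variable [HasFiniteBiproducts D]

/-- A finite direct sum of `n` copies of `X`. -/
noncomputable def copies (X : D) (n : ℕ) : D := ⨁ fun _ : Fin n => X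

/-- `G` realizes the object `RHom(X, F) ⊗_k X`, i.e.
`G ≅ ⊕_m Hom(X, F⟦m⟧) ⊗_k X⟦-m⟧`. -/
def IsHomTensorObj (X F G : D) : Prop :=
  ∃ s : Finset ℤ,
    (∀ m : ℤ, m ∉ s → ∀ f : X ⟶ F⟦m⟧, f = 0) ∧
    Nonempty (G ≅ ⨁ fun p : s => copies (X⟦-(p : ℤ)⟧) (Module.finrank k (X ⟶ F⟦(p : ℤ)⟧)))

/-- `G` realizes the object `RHom(F, X)^* ⊗_k X`, i.e.
`G ≅ ⊕_m Hom(F, X⟦m⟧)^* ⊗_k X⟦m⟧`. -/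
def IsDualHomTensorObj (X F G : D) : Prop :=
  ∃ s : Finset ℤ,
    (∀ m : ℤ, m ∉ s → ∀ f : F ⟶ X⟦m⟧, f = 0) ∧
    Nonempty (G ≅ ⨁ fun p : s => copies (X⟦(p : ℤ)⟧) (Module.finrank k (F ⟶ X⟦(p : ℤ)⟧)))

/-- `G` realizes `RHom(E, F) ⊗_{End E} E` for `E = ⊕ E i` with `End(E) ≅ k^r`. -/
def IsEvalObj {r : ℕ} (E : Fin r → D) (F G : D) : Prop :=
  ∃ Gs : Fin r → D, (∀ i, IsHomTensorObj k (E i) F (Gs i)) ∧ Nonempty (G ≅ ⨁ Gs)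

/-- `G` realizes `(D_{End E} RHom(F, E)) ⊗_{End E} E` for `E = ⊕ E i` with
`End(E) ≅ k^r`. -/
def IsCoevalObj {r : ℕ} (E : Fin r → D) (F G : D) : Prop :=
  ∃ Gs : Fin r → D, (∀ i, IsDualHomTensorObj k (E i) F (Gs i)) ∧ Nonempty (G ≅ ⨁ Gs)

end Spherical

section OneSpherical

variable {k : Type v} [Field k]
variable {D : Type u} [Category.{v} D] [Preadditive D] [Linear k D] [HasShift D ℤ]

/-- `E = ⊕ E i` is a generalized 1-spherical object (in the presence of Serre duality and
hereditariness this is equivalent to conditions (S1)-(S4) with `n = 1`):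
`End(E) ≅ k^r` as a `k`-algebra and `S E ≅ E[1]`. -/
structure GenOneSpherical (SF : SerreFunctor k D) (r : ℕ) (E : Fin r → D) : Prop where
  pos : 0 < r
  endo : ∀ i, Module.finrank k (E i ⟶ E i) = 1
  orth : ∀ i j : Fin r, i ≠ j → ∀ f : E i ⟶ E j, f = 0
  serre : ∃ σ : Equiv.Perm (Fin r), ∀ i,
    Nonempty (SF.S.functor.obj (E i) ≅ (E (σ i))⟦(1 : ℤ)⟧)

end OneSpherical

section Quivers

/-- A quiver, bundled with its type of vertices and arrows. -/
structure BundledQuiver : Type 1 where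
  /-- vertices -/
  V : Type
  /-- arrows -/
  hom : V → V → Type

instance (Q : BundledQuiver) : Quiver Q.V := ⟨Q.hom⟩

/-- The Tits quadratic form of a finite quiver:
`q(x) = Σ_v x_v² - Σ_{a : u → v} x_u x_v`. -/
noncomputable def titsForm (Q : BundledQuiver) (x : Q.V → ℤ) : ℤ :=
  (∑ᶠ v : Q.V, x v ^ 2) - ∑ᶠ (a : Q.V) (b : Q.V), (Nat.card (a ⟶ b) : ℤ) * x a * x b

/-- `Q` is a Dynkin quiver: a finite connected quiver whose Tits form is positive
definite (equivalently, the underlying graph is one of the Dynkin diagrams `A_n`, `D_n`,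
`E₆`, `E₇`, `E₈`). -/
def IsDynkinQuiver (Q : BundledQuiver) : Prop :=
  Nonempty Q.V ∧ Finite Q.V ∧ (∀ a b : Q.V, Finite (a ⟶ b)) ∧
    (∀ a b : Q.V,
      Relation.ReflTransGen (fun u v : Q.V => Nonempty (u ⟶ v) ∨ Nonempty (v ⟶ u)) a b) ∧
    ∀ x : Q.V → ℤ, x ≠ 0 → 0 < titsForm Q x

variable (k : Type v) [Field k]

/-- The category of finite dimensional `k`-representations of the quiver `Q`, realized as
the finite dimensional functors from the path category of `Q` to `k`-vector spaces. -/
abbrev RepCat (Q : BundledQuiver) :=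
  ObjectProperty.FullSubcategory (fun F : Paths Q.V ⥤ ModuleCat.{v} k =>
    ∀ x : Paths Q.V, FiniteDimensional k (F.obj x))

/-- The quiver `Ã_{m-1}` with cyclic orientation: vertices `ZMod m`, one arrow
`i → i + 1` for each `i`. -/
def cyclicQuiver (m : ℕ) : BundledQuiver :=
  ⟨ZMod m, fun i j => PLift (i + 1 = j)⟩

/-- The category of finite dimensional nilpotent `k`-representations of the quiver
`Ã_{m-1}` with cyclic orientation. -/
abbrev NilpRepCat (m : ℕ) :=
  ObjectProperty.FullSubcategory (fun F : Paths (cyclicQuiver m).V ⥤ ModuleCat.{v} k =>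
    (∀ x : Paths (cyclicQuiver m).V, FiniteDimensional k (F.obj x)) ∧
    ∃ N : ℕ, ∀ (a b : Paths (cyclicQuiver m).V) (p : a ⟶ b),
      N ≤ Quiver.Path.length p → F.map p = 0)

end Quivers

section Equivalences

variable {k : Type v} [Field k]

/-- The category `B` is equivalent to the full subcategory of `D` with class of objects
`S`. -/
def EquivalentTo (D : Type u) [Category.{v} D] (S : Set D) (B : Type u') [Category.{v'} B] :
    Prop :=
  ∃ ι : B ⥤ D, ι.Full ∧ ι.Faithful ∧ ι.essImage = S

/-- The abelian categories presented by hereditary hearts in the triangulated category `D`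
(which then satisfies `D ≃ D^b(heart)`) are derived equivalent to the category `B`: this
is witnessed by a full and faithful functor of `B` onto a hereditary heart of `D`. -/
def DerivedEquivalentTo (D : Type u) [Category.{v} D] [Preadditive D] [HasZeroObject D]
    [HasShift D ℤ] [∀ n : ℤ, (shiftFunctor D n).Additive] [Pretriangulated D]
    [HasFiniteBiproducts D] (B : Type u') [Category.{v'} B] : Prop :=
  ∃ ι : B ⥤ D, ι.Full ∧ ι.Faithful ∧ IsHereditaryHeart ι.essImage

end Equivalences

section Coh

variable {k : Type v} [Field k]
variable {D : Type u} [Category.{v} D] [Preadditive D] [Linear k D] [HasZeroObject D]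
  [HasShift D ℤ] [∀ n : ℤ, (shiftFunctor D n).Additive] [Pretriangulated D]
  [HasFiniteBiproducts D]

/-- The hereditary heart `H'` of `D` is (the image of) the category of coherent sheaves on
a weighted projective line of tubular type: it is a connected, noetherian, Ext-finite
hereditary abelian category without nonzero projective objects admitting a tilting complex
(i.e. the coherent sheaves on some weighted projective line, by [Lenzing, Thm 1]), and
every Auslander-Reiten component is a tube (which among weighted projective lines
characterizes those of tubular type, i.e. of weight type `(2,2,2,2)`, `(3,3,3)`,
`(2,4,4)` or `(2,3,6)`). -/
structure IsTubularWPLHeart (SF : SerreFunctor k D) (H' : Set D) : Prop where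
  heart : IsHereditaryHeart H'
  connected : HeartConnected H'
  noetherian : ∀ X ∈ H', HeartNoetherianObj H' X
  no_projectives : ∀ P ∈ H', (∀ Y ∈ H', ∀ f : P ⟶ Y⟦(1 : ℤ)⟧, f = 0) → IsZero P
  has_tilting : ∃ T : D, IsTiltingObject T
  tubular : ∀ K : Set D, IsARComponent K → (∃ X, X ∈ K ∧ X ∈ H') →
    ∃ r : ℕ, 0 < r ∧ IsTube SF.tau K r

/-- The hereditary heart `H'` of `D` is (the image of) the category of coherent sheaves on
an elliptic curve: it is a connected, noetherian, Ext-finite hereditary abelian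
1-Calabi-Yau category with at least two non-isomorphic simple objects (by the
classification of abelian 1-Calabi-Yau categories, these conditions characterize
`coh E` for `E` an elliptic curve over the algebraically closed field `k`). -/
structure IsEllipticCohHeart (SF : SerreFunctor k D) (H' : Set D) : Prop where
  heart : IsHereditaryHeart H'
  connected : HeartConnected H'
  noetherian : ∀ X ∈ H', HeartNoetherianObj H' X
  oneCY : Nonempty (SF.S.functor ≅ shiftFunctor D (1 : ℤ))
  two_simples : ∃ X Y : D, HeartSimple H' X ∧ HeartSimple H' Y ∧ ¬ Nonempty (X ≅ Y)

end Coh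

end FCY

namespace FCY

/-!
Both (S4) and (S4') say that for every `i` and every `X` the composition pairing
`Hom(E i, X) × Hom(X, E (σ i)⟦n⟧) → Hom(E i, E (σ i)⟦n⟧) ≅ k` is non-degenerate on both sides.
By Yoneda, a natural isomorphism `Φ` as in (S4') satisfies `Φ g f = Φ 𝟙 (g ≫ f)`, so it
induces such a pairing; conversely, over a Hom-finite category a pairing that is
non-degenerate on both sides is perfect, and its curried form is natural in `X`.
Shifting by `n - j` identifies (S4) in degree `j` with (S4) in degree `n`, where (S3) kills
every summand except `E (σ i)`.
-/

section CompositionPairing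

variable {D : Type u} [Category.{v} D] [Preadditive D]

def CompNondegenerate (A Y : D) : Prop :=
  ∀ X : D, (∀ g : A ⟶ X, (∀ f : X ⟶ Y, g ≫ f = 0) → g = 0) ∧
    ∀ f : X ⟶ Y, (∀ g : A ⟶ X, g ≫ f = 0) → f = 0

variable {k : Type v} [Field k] [Linear k D] {A Y : D}

noncomputable def dualPairing
    (Φ : (linearCoyoneda k D).obj (op A) ≅ ((linearYoneda k D).obj Y).rightOp ⋙ modDual k)
    (X : D) : (A ⟶ X) ≃ₗ[k] Module.Dual k (X ⟶ Y) :=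
  (Φ.app X).toLinearEquiv

lemma dualPairing_apply
    (Φ : (linearCoyoneda k D).obj (op A) ≅ ((linearYoneda k D).obj Y).rightOp ⋙ modDual k)
    {X : D} (g : A ⟶ X) (f : X ⟶ Y) : dualPairing Φ X g f = dualPairing Φ A (𝟙 A) (g ≫ f) := by
  have h : dualPairing Φ X (𝟙 A ≫ g) = (dualPairing Φ A (𝟙 A)).comp (Linear.leftComp k Y g) :=
    LinearMap.congr_fun (ModuleCat.hom_ext_iff.mp (Φ.hom.naturality g)) (𝟙 A)
  simpa using LinearMap.congr_fun h f

lemma compNondegenerate_of_coyonedaIsoDualYoneda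
    (Φ : (linearCoyoneda k D).obj (op A) ≅ ((linearYoneda k D).obj Y).rightOp ⋙ modDual k) :
    CompNondegenerate A Y := by
  intro X
  constructor
  · intro g hg
    refine (dualPairing Φ X).map_eq_zero_iff.1 (LinearMap.ext fun f => ?_)
    rw [dualPairing_apply, hg f, map_zero, LinearMap.zero_apply]
  · intro f hf
    refine (Module.forall_dual_apply_eq_zero_iff k f).1 fun φ => ?_
    obtain ⟨g, rfl⟩ := (dualPairing Φ X).surjective φ
    rw [dualPairing_apply, hf g, map_zero]

variable [∀ X₁ X₂ : D, FiniteDimensional k (X₁ ⟶ X₂)]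

lemma nonempty_coyonedaIsoDualYoneda_of_compNondegenerate
    (h1 : Module.finrank k (A ⟶ Y) = 1) (h : CompNondegenerate A Y) :
    Nonempty
      ((linearCoyoneda k D).obj (op A) ≅ ((linearYoneda k D).obj Y).rightOp ⋙ modDual k) := by
  let ℓ : (A ⟶ Y) ≃ₗ[k] k := LinearEquiv.ofFinrankEq _ _ (by rw [h1, Module.finrank_self])
  let B (X : D) : (A ⟶ X) →ₗ[k] (X ⟶ Y) →ₗ[k] k := (Linear.comp A X Y).compr₂ ℓ.toLinearMap
  have hB (X : D) : (B X).IsPerfPair := by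
    refine .of_injective ((injective_iff_map_eq_zero _).2 fun g hg => ?_)
      ((injective_iff_map_eq_zero _).2 fun f hf => ?_)
    · exact (h X).1 g fun f => ℓ.map_eq_zero_iff.1 (LinearMap.congr_fun hg f)
    · exact (h X).2 f fun g => ℓ.map_eq_zero_iff.1 (LinearMap.congr_fun hf g)
  exact ⟨NatIso.ofComponents (fun X => letI := hB X; (B X).toPerfPair.toModuleIso)
    fun u => ModuleCat.hom_ext <| LinearMap.ext fun g => LinearMap.ext fun f =>
      congrArg ℓ (Category.assoc g u f)⟩

end CompositionPairing

section Shift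

variable {D : Type u} [Category.{v} D] [HasShift D ℤ]

noncomputable def shiftHomEquiv (X Y : D) (a b c : ℤ) (h : b + a = c) :
    (X ⟶ Y⟦b⟧) ≃ (X⟦a⟧ ⟶ Y⟦c⟧) :=
  (Functor.FullyFaithful.ofFullyFaithful (shiftFunctor D a)).homEquiv.trans
    ((Iso.refl _).homCongr ((shiftFunctorAdd' D b a c h).app Y).symm)

lemma shiftHomEquiv_zero [Preadditive D] {X Y : D} (a b c : ℤ) (h : b + a = c) :
    shiftHomEquiv X Y a b c h 0 = 0 := by
  simp [shiftHomEquiv]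

lemma compTo_eq_comp_shiftHomEquiv {X Y Z : D} (a b c : ℤ) (h : a + b = c) (g : X ⟶ Y⟦a⟧)
    (f : Y ⟶ Z⟦b⟧) : compTo a b c h g f = g ≫ shiftHomEquiv Y Z a b c (by omega) f := by
  simp [compTo, shiftHomEquiv]

lemma compTo_mk₀ {X Y Z : D} (a c : ℤ) (ha : a = 0) (h : a + c = c) (g : X ⟶ Y)
    (f : Y ⟶ Z⟦c⟧) : compTo a c c h (ShiftedHom.mk₀ a ha g) f = g ≫ f :=
  ShiftedHom.mk₀_comp a ha g f

end Shift

section Spherical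

variable {D : Type u} [Category.{v} D] [Preadditive D] [HasShift D ℤ] {n : ℤ} {r : ℕ}
  {E : Fin r → D}

lemma SphericalS4.compNondegenerate (hS4 : SphericalS4 n E) {σ : Equiv.Perm (Fin r)}
    (hσ : ∀ i j : Fin r, j ≠ σ i → ∀ f : E i ⟶ (E j)⟦n⟧, f = 0) (i : Fin r) :
    CompNondegenerate (E i) ((E (σ i))⟦n⟧) := by
  intro X
  constructor
  · intro g hg
    have hmk₀ : ShiftedHom.mk₀ (n - n) (sub_self n) g = 0 := by
      refine hS4.2 n X i _ fun i' f => ?_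
      rw [compTo_mk₀]
      by_cases hi' : i' = σ i
      · subst hi'
        exact hg f
      · exact hσ i i' hi' _
    rw [← ShiftedHom.mk₀_zero (E i) X (n - n) (sub_self n)] at hmk₀
    exact (ShiftedHom.homEquiv (n - n) (sub_self n)).injective hmk₀
  · intro f hf
    refine hS4.1 n X (σ i) f fun i₀ g => ?_
    obtain ⟨g, rfl⟩ := (ShiftedHom.homEquiv (n - n) (sub_self n)).surjective g
    rw [ShiftedHom.homEquiv_apply, compTo_mk₀]
    by_cases hi₀ : i₀ = i
    · subst hi₀
      exact hf g
    · exact hσ i₀ (σ i) (σ.injective.ne (Ne.symm hi₀)) _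

lemma sphericalS4_of_compNondegenerate (σ : Equiv.Perm (Fin r))
    (h : ∀ i, CompNondegenerate (E i) ((E (σ i))⟦n⟧)) : SphericalS4 n E := by
  constructor
  · intro j F i' f hf
    have hi' := h (σ.symm i') (F⟦n - j⟧)
    rw [Equiv.apply_symm_apply] at hi'
    refine (shiftHomEquiv F (E i') (n - j) j n (by omega)).injective ?_
    rw [shiftHomEquiv_zero]
    refine hi'.2 _ fun g => ?_
    rw [← compTo_eq_comp_shiftHomEquiv]
    exact hf _ g
  · intro j F i g hg
    refine (h i (F⟦n - j⟧)).1 g fun f => ?_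
    obtain ⟨f, rfl⟩ := (shiftHomEquiv F (E (σ i)) (n - j) j n (by omega)).surjective f
    rw [← compTo_eq_comp_shiftHomEquiv]
    exact hg _ f

end Spherical

/-- Lemma 3.8 of the paper.
Let `A` be an Ext-finite abelian `k`-linear category (presented as the heart of a bounded
t-structure `t` on the `k`-linear Hom-finite triangulated category `D = D^b(A)`), and let
`E = ⊕_{i=1}^r E i` be an object of `D^b(A)` satisfying conditions (S1), (S2) and (S3)
(so `End(E) ≅ k^r`; condition (S1) is automatic in this presentation).  Then condition
(S4) (non-degeneracy of all the pairings `Hom^j(F,E) × Hom^{n-j}(E,F) → Hom^n(E,E)`)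
holds if and only if (S4') there is a permutation `σ` of `{1,…,r}` with
`Hom(E i, F) ≅ Hom(F, E (σ i) ⟦n⟧)*` naturally in `F ∈ D^b(A)`, for every `i`. -/
theorem spherical_S4_iff_S4'
    {k : Type v} [Field k] [IsAlgClosed k]
    {D : Type u} [Category.{v} D] [Preadditive D] [CategoryTheory.Linear k D]
    [HasZeroObject D] [HasShift D ℤ] [∀ n : ℤ, (shiftFunctor D n).Additive]
    [Pretriangulated D] [IsTriangulated D] [HasFiniteBiproducts D] [IsIdempotentComplete D]
    [∀ X Y : D, FiniteDimensional k (X ⟶ Y)]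
    (t : Triangulated.TStructure D) (ht : TBounded t)
    (n : ℤ) (hn : 0 < n) (r : ℕ) (hr : 0 < r) (E : Fin r → D)
    (hS2 : SphericalS2 E) (hS3 : SphericalS3 k n E) :
    SphericalS4 n E ↔ SphericalS4' k n E := by
  obtain ⟨-, -, ⟨σ, hσ, hσ_vanish⟩, -⟩ := hS3
  constructor
  · intro hS4
    exact ⟨σ, fun i => nonempty_coyonedaIsoDualYoneda_of_compNondegenerate (hσ i)
      (hS4.compNondegenerate hσ_vanish i)⟩
  · rintro ⟨σ', hσ'⟩
    exact sphericalS4_of_compNondegenerate σ' fun i =>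
      (hσ' i).elim compNondegenerate_of_coyonedaIsoDualYoneda

end FCY
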